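/- Let F be a field with char F ∉ {2,3}, let A be the Matsuo algebra of the affine plane of order 3 over F, let L be a line, and let M and N be the two other lines parallel to L. Then A is the direct sum of the eigenspaces of the left-multiplication operator x ↦ e_L x for the eigenvalues 1, 0 and 1/2, and these eigenspaces are exactly: the 1-eigenspace is F·e_L; the 0-eigenspace is { Σ_{i∈L} λ_i p_i + λ(Σ_{i∈M} p_i − Σ_{i∈N} p_i) : λ_i, λ ∈ F } (dimension 4); and the (1/2)-eigenspace is { Σ_{i∈M} λ_i p_i + Σ_{j∈N} μ_j p_j : Σ_i λ_i = 0 and Σ_j μ_j = 0 } (dimension 4). -/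

import Mathlib

open Finset

/-- The Matsuo algebra `M_{1/2}(P3)` of the affine plane of order 3 over `F`: the free
`F`-module on the point set `P = (ℤ/3)²`, with the commutative bilinear multiplication
determined by `p_u p_u = p_u` and `p_u p_v = (1/4)(p_u + p_v − p_{−u−v})` for `u ≠ v`. -/
noncomputable def mMul (F : Type*) [Field F] (x y : ZMod 3 × ZMod 3 → F) :
    ZMod 3 × ZMod 3 → F :=
  ∑ u : ZMod 3 × ZMod 3, ∑ v : ZMod 3 × ZMod 3,
    (x u * y v) •
      (if u = v then Pi.single u (1 : F)
       else (4⁻¹ : F) • (Pi.single u (1 : F) + Pi.single v (1 : F) -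
         Pi.single (-u - v) (1 : F)) : ZMod 3 × ZMod 3 → F)

/-- The sum `Σ_{u ∈ s} p_u` in the Matsuo algebra. -/
noncomputable def pSum (F : Type*) [Field F] (s : Finset (ZMod 3 × ZMod 3)) :
    ZMod 3 × ZMod 3 → F :=
  ∑ u ∈ s, Pi.single u 1

/-- The line of the affine plane of order 3 through `a` with direction `w`
(a coset of the 1-dimensional subspace spanned by `w`). -/
def lineThru (a w : ZMod 3 × ZMod 3) : Finset (ZMod 3 × ZMod 3) :=
  Finset.image (fun t : ZMod 3 => a + t • w) Finset.univ

/-!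
For `y` in the algebra let `S_M y`, `S_N y` be its coordinate sums over the two lines `M`, `N`
parallel to `L`, and let `T y = e_L y`. Because `-p - L` is again a line parallel to `L`
(namely `L`, `N`, `M` for `p` in `L`, `M`, `N`), the product formula collapses to
`(T y)_p = -(S_M y + S_N y)/6` on `L` and `(T y)_p = y_p/2 + S_N y/6` on `M` (symmetrically
on `N`); the three eigenspaces are read off from this. It also gives
`T (2 T y - y) = ((S_M y + S_N y)/2) e_L` and `T e_L = e_L`, hence `T (T - 1) (2T - 1) = 0`,
and the Lagrange interpolation polynomials at `1, 0, 1/2` split every element uniquely.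
-/

section Decomposition

variable {F V : Type*} [Field F] [AddCommGroup V] [Module F V]

theorem LinearMap.eigen_components_eq (T : V →ₗ[F] V) (h2 : (2 : F) ≠ 0) {y1 y0 yh : V}
    (h1 : T y1 = y1) (h0 : T y0 = 0) (hh : T yh = (2⁻¹ : F) • yh) :
    y1 = (2 : F) • T (T (y1 + y0 + yh)) - T (y1 + y0 + yh) ∧
    y0 = (2 : F) • T (T (y1 + y0 + yh)) - (3 : F) • T (y1 + y0 + yh) + (y1 + y0 + yh) ∧
    yh = (4 : F) • T (y1 + y0 + yh) - (4 : F) • T (T (y1 + y0 + yh)) := by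
  simp only [map_add, map_smul, h1, h0, hh, map_zero]
  refine ⟨?_, ?_, ?_⟩ <;> match_scalars <;> field_simp <;> ring

theorem LinearMap.exists_eigen_decomposition (T : V →ₗ[F] V) (h2 : (2 : F) ≠ 0)
    (hT : ∀ x, T (T ((2 : F) • T x - x)) = T ((2 : F) • T x - x)) (x : V) :
    ∃ x1 x0 xh : V, T x1 = x1 ∧ T x0 = 0 ∧ T xh = (2⁻¹ : F) • xh ∧ x = x1 + x0 + xh ∧
      ∀ y1 y0 yh : V, T y1 = y1 → T y0 = 0 → T yh = (2⁻¹ : F) • yh → x = y1 + y0 + yh →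
        y1 = x1 ∧ y0 = x0 ∧ yh = xh := by
  have hT' := hT x
  simp only [map_sub, map_smul] at hT'
  refine ⟨(2 : F) • T (T x) - T x, (2 : F) • T (T x) - (3 : F) • T x + x,
    (4 : F) • T x - (4 : F) • T (T x), ?_, ?_, ?_, by module, ?_⟩
  · simp only [map_sub, map_smul]
    linear_combination (norm := module) hT'
  · simp only [map_add, map_sub, map_smul]
    linear_combination (norm := module) hT'
  · simp only [map_sub, map_smul]
    linear_combination (norm := skip) (-2 : F) • hT'
    match_scalars <;> field_simp <;> ring
  · rintro y1 y0 yh h1 h0 hh rfl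
    exact T.eigen_components_eq h2 h1 h0 hh

end Decomposition

lemma inv_six {K : Type*} [DivisionRing K] : (6 : K)⁻¹ = 2⁻¹ * 3⁻¹ := by
  rw [← mul_inv_rev]; norm_num

lemma ZMod.three_eq_or_eq_or_eq : ∀ {α β γ : ZMod 3}, α ≠ β → α ≠ γ → β ≠ γ →
    ∀ x, x = α ∨ x = β ∨ x = γ := by
  decide

lemma ZMod.three_neg_sub_self : ∀ α : ZMod 3, -α - α = α := by decide

lemma ZMod.three_neg_sub_eq : ∀ {α β γ : ZMod 3}, α ≠ β → α ≠ γ → β ≠ γ → -β - α = γ := by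
  decide

lemma neg_sub_eq_iff_neg_sub_eq : ∀ p u v : ZMod 3 × ZMod 3, p = -u - v ↔ -p - u = v := by
  decide

lemma neg_sub_eq_self_iff : ∀ p u : ZMod 3 × ZMod 3, -p - u = u ↔ p = u := by decide

section Product

variable {F : Type*} [Field F]

lemma pSum_apply (s : Finset (ZMod 3 × ZMod 3)) (p : ZMod 3 × ZMod 3) :
    pSum F s p = if p ∈ s then 1 else 0 := by
  rw [pSum, Finset.sum_apply, Finset.sum_pi_single]

lemma sum_smul_single_apply (s : Finset (ZMod 3 × ZMod 3)) (g : ZMod 3 × ZMod 3 → F)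
    (p : ZMod 3 × ZMod 3) :
    (∑ i ∈ s, g i • (Pi.single i 1 : ZMod 3 × ZMod 3 → F)) p = if p ∈ s then g p else 0 := by
  simp only [Finset.sum_apply, Pi.smul_apply, Pi.single_apply, smul_eq_mul, mul_ite, mul_one,
    mul_zero, Finset.sum_ite_eq]

theorem mMul_apply (x y : ZMod 3 × ZMod 3 → F) (p : ZMod 3 × ZMod 3) :
    mMul F x y p = x p * y p + 4⁻¹ * (x p * ∑ v, y v + y p * ∑ u, x u - x p * y p -
      ∑ u, x u * y (-p - u)) := by
  have coeff : ∀ u v : ZMod 3 × ZMod 3,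
      ((if u = v then Pi.single u (1 : F)
       else (4⁻¹ : F) • (Pi.single u (1 : F) + Pi.single v (1 : F) -
         Pi.single (-u - v) (1 : F)) : ZMod 3 × ZMod 3 → F) p) =
      (if p = u then 1 else 0) * (if p = v then 1 else 0) + 4⁻¹ * ((if p = u then 1 else 0) +
        (if p = v then 1 else 0) - (if p = u then 1 else 0) * (if p = v then 1 else 0) -
        (if -p - u = v then 1 else 0)) := by
    intro u v
    -- for `u = v` the correction terms cancel because `-u - u = u`
    by_cases huv : u = v
    · subst huv
      simp only [if_true, Pi.single_apply, neg_sub_eq_self_iff]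
      split_ifs <;> ring
    · simp only [huv, if_false, Pi.smul_apply, Pi.add_apply, Pi.sub_apply, Pi.single_apply,
        smul_eq_mul, neg_sub_eq_iff_neg_sub_eq p u v]
      split_ifs <;> simp_all
  simp only [mMul, Finset.sum_apply, Pi.smul_apply, smul_eq_mul, coeff]
  simp only [mul_add, mul_sub, Finset.sum_add_distrib, Finset.sum_sub_distrib, mul_ite, mul_one,
    mul_zero, Finset.sum_ite_eq, Finset.mem_univ, if_true, Finset.sum_ite_irrel,
    Finset.sum_const_zero, ← Finset.sum_mul, ← Finset.mul_sum]
  ring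

noncomputable def mMulLeft (x : ZMod 3 × ZMod 3 → F) :
    (ZMod 3 × ZMod 3 → F) →ₗ[F] (ZMod 3 × ZMod 3 → F) where
  toFun := mMul F x
  map_add' y z := by
    simp only [mMul, Pi.add_apply, mul_add, add_smul, Finset.sum_add_distrib]
  map_smul' t y := by
    simp only [mMul, Pi.smul_apply, smul_eq_mul, RingHom.id_apply, Finset.smul_sum, smul_smul,
      mul_left_comm]

@[simp]
lemma mMulLeft_apply (x y : ZMod 3 × ZMod 3 → F) : mMulLeft x y = mMul F x y := rfl

variable (F) in
noncomputable def lineIdempotent (s : Finset (ZMod 3 × ZMod 3)) : ZMod 3 × ZMod 3 → F :=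
  (3⁻¹ : F) • pSum F Finset.univ - (2 / 3 : F) • pSum F s

lemma lineIdempotent_apply (s : Finset (ZMod 3 × ZMod 3)) (p : ZMod 3 × ZMod 3) :
    lineIdempotent F s p = if p ∈ s then -3⁻¹ else 3⁻¹ := by
  simp only [lineIdempotent, Pi.sub_apply, Pi.smul_apply, pSum_apply, Finset.mem_univ, if_true,
    smul_eq_mul]
  split_ifs <;> ring

lemma sum_lineIdempotent (h3 : (3 : F) ≠ 0) {s : Finset (ZMod 3 × ZMod 3)} (hs : s.card = 3) :
    ∑ u, lineIdempotent F s u = 1 := by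
  simp only [lineIdempotent, Pi.sub_apply, Pi.smul_apply, pSum_apply, smul_eq_mul,
    Finset.sum_sub_distrib, ← Finset.mul_sum, Finset.sum_boole, Finset.mem_univ,
    Finset.filter_mem_eq_inter, Finset.univ_inter, hs]
  field_simp
  norm_num

theorem mMul_lineIdempotent_apply (h2 : (2 : F) ≠ 0) (h3 : (3 : F) ≠ 0)
    {s : Finset (ZMod 3 × ZMod 3)} (hs : s.card = 3) (y : ZMod 3 × ZMod 3 → F)
    (p : ZMod 3 × ZMod 3) :
    mMul F (lineIdempotent F s) y p =
      if p ∈ s then 6⁻¹ * (∑ u ∈ s, y (-p - u) - ∑ v, y v)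
      else 2⁻¹ * y p + 6⁻¹ * ∑ u ∈ s, y (-p - u) := by
  have reflect : ∑ u, lineIdempotent F s u * y (-p - u) =
      3⁻¹ * ∑ v, y v - 2 * 3⁻¹ * ∑ u ∈ s, y (-p - u) := by
    simp only [lineIdempotent, Pi.sub_apply, Pi.smul_apply, pSum_apply, Finset.mem_univ, if_true,
      smul_eq_mul, mul_one, sub_mul, mul_assoc, Finset.sum_sub_distrib, ← Finset.mul_sum, ite_mul,
      one_mul, zero_mul, Finset.sum_ite_mem, Finset.univ_inter,
      Fintype.sum_equiv (Equiv.subLeft (-p)) (fun u => y (-p - u)) y (fun _ => rfl)]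
    ring
  have h4 : (4 : F) ≠ 0 := by rw [show (4 : F) = 2 * 2 by norm_num]; exact mul_ne_zero h2 h2
  have h6 : (6 : F) ≠ 0 := by rw [show (6 : F) = 2 * 3 by norm_num]; exact mul_ne_zero h2 h3
  rw [mMul_apply, sum_lineIdempotent h3 hs, reflect, lineIdempotent_apply]
  split_ifs
  · field_simp
    ring
  · field_simp
    ring

end Product

def lineIndex (w u : ZMod 3 × ZMod 3) : ZMod 3 := w.2 * u.1 - w.1 * u.2

lemma mem_lineThru_iff : ∀ {a w u : ZMod 3 × ZMod 3}, w ≠ 0 →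
    (u ∈ lineThru a w ↔ lineIndex w u = lineIndex w a) := by
  decide

lemma lineIndex_neg_sub (w p u : ZMod 3 × ZMod 3) :
    lineIndex w (-p - u) = -lineIndex w p - lineIndex w u := by
  simp only [lineIndex, Prod.fst_sub, Prod.snd_sub, Prod.fst_neg, Prod.snd_neg]
  ring

lemma self_mem_lineThru (a w : ZMod 3 × ZMod 3) : a ∈ lineThru a w :=
  Finset.mem_image.2 ⟨0, Finset.mem_univ _, by simp⟩

lemma lineThru_eq_iff {a b w : ZMod 3 × ZMod 3} (hw : w ≠ 0) :
    lineThru a w = lineThru b w ↔ lineIndex w a = lineIndex w b := by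
  refine ⟨fun h => ((mem_lineThru_iff hw).1 (h ▸ self_mem_lineThru a w)), fun h => ?_⟩
  ext u
  rw [mem_lineThru_iff hw, mem_lineThru_iff hw, h]

lemma card_lineThru {a w : ZMod 3 × ZMod 3} (hw : w ≠ 0) : (lineThru a w).card = 3 := by
  rw [lineThru, Finset.card_image_of_injective _
    fun s t h => smul_left_injective (ZMod 3) hw (add_left_cancel h)]
  rfl

lemma image_neg_sub_lineThru (p a w : ZMod 3 × ZMod 3) :
    (lineThru a w).image (fun u => -p - u) = lineThru (-p - a) w := by
  ext v
  simp only [lineThru, Finset.image_image, Finset.mem_image, Finset.mem_univ, true_and,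
    Function.comp_apply]
  constructor
  · rintro ⟨t, rfl⟩
    exact ⟨-t, by module⟩
  · rintro ⟨t, rfl⟩
    exact ⟨-t, by module⟩

lemma sum_lineThru_neg_sub {M : Type*} [AddCommMonoid M] (y : ZMod 3 × ZMod 3 → M)
    (p a w : ZMod 3 × ZMod 3) :
    ∑ u ∈ lineThru a w, y (-p - u) = ∑ v ∈ lineThru (-p - a) w, y v := by
  rw [← image_neg_sub_lineThru, Finset.sum_image fun u _ v _ h => by simpa using h]

lemma notMem_lineThru_of_mem {a b w p : ZMod 3 × ZMod 3} (hw : w ≠ 0)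
    (hab : lineThru a w ≠ lineThru b w) (hp : p ∈ lineThru a w) : p ∉ lineThru b w := by
  rw [mem_lineThru_iff hw] at hp ⊢
  rw [ne_eq, lineThru_eq_iff hw] at hab
  exact fun h => hab (hp.symm.trans h)

lemma lineThru_neg_sub_eq_self {a w p : ZMod 3 × ZMod 3} (hw : w ≠ 0) (hp : p ∈ lineThru a w) :
    lineThru (-p - a) w = lineThru a w := by
  rw [mem_lineThru_iff hw] at hp
  rw [lineThru_eq_iff hw, lineIndex_neg_sub, hp, ZMod.three_neg_sub_self]

lemma sum_lineThru_eq_three_mul {R : Type*} [NonAssocSemiring R] {a w : ZMod 3 × ZMod 3}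
    (hw : w ≠ 0) {y : ZMod 3 × ZMod 3 → R} {k : R} (h : ∀ v ∈ lineThru a w, y v = k) :
    ∑ v ∈ lineThru a w, y v = 3 * k := by
  rw [Finset.sum_congr rfl h, Finset.sum_const, card_lineThru hw, nsmul_eq_mul, Nat.cast_ofNat]

structure IsParallelClass (a b c w : ZMod 3 × ZMod 3) : Prop where
  ne_zero : w ≠ 0
  ne₁₂ : lineThru a w ≠ lineThru b w
  ne₁₃ : lineThru a w ≠ lineThru c w
  ne₂₃ : lineThru b w ≠ lineThru c w

namespace IsParallelClass

variable {a b c w p : ZMod 3 × ZMod 3}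

lemma swap (h : IsParallelClass a b c w) : IsParallelClass a c b w :=
  ⟨h.ne_zero, h.ne₁₃, h.ne₁₂, h.ne₂₃.symm⟩

lemma lineIndex_ne (h : IsParallelClass a b c w) :
    lineIndex w a ≠ lineIndex w b ∧ lineIndex w a ≠ lineIndex w c ∧
      lineIndex w b ≠ lineIndex w c := by
  simp only [ne_eq, ← lineThru_eq_iff h.ne_zero]
  exact ⟨h.ne₁₂, h.ne₁₃, h.ne₂₃⟩

lemma mem_or_mem_or_mem (h : IsParallelClass a b c w) (p : ZMod 3 × ZMod 3) :
    p ∈ lineThru a w ∨ p ∈ lineThru b w ∨ p ∈ lineThru c w := by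
  obtain ⟨hab, hac, hbc⟩ := h.lineIndex_ne
  simpa only [mem_lineThru_iff h.ne_zero] using ZMod.three_eq_or_eq_or_eq hab hac hbc _

lemma funext {X : Type*} (h : IsParallelClass a b c w) {f g : ZMod 3 × ZMod 3 → X}
    (ha : ∀ p ∈ lineThru a w, f p = g p) (hb : ∀ p ∈ lineThru b w, f p = g p)
    (hc : ∀ p ∈ lineThru c w, f p = g p) : f = g := by
  ext p
  rcases h.mem_or_mem_or_mem p with hp | hp | hp
  exacts [ha p hp, hb p hp, hc p hp]

lemma sum_univ {M : Type*} [AddCommMonoid M] (h : IsParallelClass a b c w)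
    (y : ZMod 3 × ZMod 3 → M) :
    ∑ v, y v = ∑ v ∈ lineThru a w, y v + ∑ v ∈ lineThru b w, y v + ∑ v ∈ lineThru c w, y v := by
  have hdisj : ∀ {d e}, lineThru d w ≠ lineThru e w → Disjoint (lineThru d w) (lineThru e w) :=
    fun hde => Finset.disjoint_left.2 fun _ => notMem_lineThru_of_mem h.ne_zero hde
  have huniv : Finset.univ = lineThru a w ∪ lineThru b w ∪ lineThru c w := by
    ext p
    simpa only [Finset.mem_univ, Finset.mem_union, true_iff, or_assoc] using h.mem_or_mem_or_mem p
  rw [huniv, Finset.sum_union (Finset.disjoint_union_left.2 ⟨hdisj h.ne₁₃, hdisj h.ne₂₃⟩),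
    Finset.sum_union (hdisj h.ne₁₂)]

lemma lineThru_neg_sub_eq (h : IsParallelClass a b c w) (hp : p ∈ lineThru b w) :
    lineThru (-p - a) w = lineThru c w := by
  obtain ⟨hab, hac, hbc⟩ := h.lineIndex_ne
  rw [mem_lineThru_iff h.ne_zero] at hp
  rw [lineThru_eq_iff h.ne_zero, lineIndex_neg_sub, hp, ZMod.three_neg_sub_eq hab hac hbc]

lemma notMem_of_mem_left (h : IsParallelClass a b c w) (hp : p ∈ lineThru a w) :
    p ∉ lineThru b w ∧ p ∉ lineThru c w :=
  ⟨notMem_lineThru_of_mem h.ne_zero h.ne₁₂ hp, notMem_lineThru_of_mem h.ne_zero h.ne₁₃ hp⟩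

lemma notMem_of_mem_mid (h : IsParallelClass a b c w) (hp : p ∈ lineThru b w) :
    p ∉ lineThru a w ∧ p ∉ lineThru c w :=
  ⟨notMem_lineThru_of_mem h.ne_zero h.ne₁₂.symm hp, notMem_lineThru_of_mem h.ne_zero h.ne₂₃ hp⟩

lemma notMem_of_mem_right (h : IsParallelClass a b c w) (hp : p ∈ lineThru c w) :
    p ∉ lineThru a w ∧ p ∉ lineThru b w :=
  h.swap.notMem_of_mem_mid hp

end IsParallelClass

section LineIdempotent

variable {F : Type*} [Field F] {a b c w p : ZMod 3 × ZMod 3}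

theorem mMul_lineIdempotent_apply_of_mem (h2 : (2 : F) ≠ 0) (h3 : (3 : F) ≠ 0)
    (h : IsParallelClass a b c w) (y : ZMod 3 × ZMod 3 → F) (hp : p ∈ lineThru a w) :
    mMul F (lineIdempotent F (lineThru a w)) y p =
      -6⁻¹ * (∑ v ∈ lineThru b w, y v + ∑ v ∈ lineThru c w, y v) := by
  rw [mMul_lineIdempotent_apply h2 h3 (card_lineThru h.ne_zero), if_pos hp,
    sum_lineThru_neg_sub, lineThru_neg_sub_eq_self h.ne_zero hp, h.sum_univ]
  ring

theorem mMul_lineIdempotent_apply_of_mem_parallel (h2 : (2 : F) ≠ 0) (h3 : (3 : F) ≠ 0)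
    (h : IsParallelClass a b c w) (y : ZMod 3 × ZMod 3 → F) (hp : p ∈ lineThru b w) :
    mMul F (lineIdempotent F (lineThru a w)) y p =
      2⁻¹ * y p + 6⁻¹ * ∑ v ∈ lineThru c w, y v := by
  rw [mMul_lineIdempotent_apply h2 h3 (card_lineThru h.ne_zero),
    if_neg (h.notMem_of_mem_mid hp).1, sum_lineThru_neg_sub,
    h.lineThru_neg_sub_eq hp]

lemma sum_lineThru_lineIdempotent (h3 : (3 : F) ≠ 0) (h : IsParallelClass a b c w) :
    ∑ v ∈ lineThru b w, lineIdempotent F (lineThru a w) v = 1 := by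
  rw [sum_lineThru_eq_three_mul h.ne_zero (k := 3⁻¹) fun v hv => by
    rw [lineIdempotent_apply, if_neg (h.notMem_of_mem_mid hv).1],
    mul_inv_cancel₀ h3]

theorem mMul_lineIdempotent_self (h2 : (2 : F) ≠ 0) (h3 : (3 : F) ≠ 0)
    (h : IsParallelClass a b c w) :
    mMul F (lineIdempotent F (lineThru a w)) (lineIdempotent F (lineThru a w)) =
      lineIdempotent F (lineThru a w) := by
  refine h.funext (fun p hp => ?_) (fun p hp => ?_) (fun p hp => ?_)
  · rw [mMul_lineIdempotent_apply_of_mem h2 h3 h _ hp, sum_lineThru_lineIdempotent h3 h,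
      sum_lineThru_lineIdempotent h3 h.swap, lineIdempotent_apply, if_pos hp, inv_six]
    field_simp
    norm_num
  · rw [mMul_lineIdempotent_apply_of_mem_parallel h2 h3 h _ hp,
      sum_lineThru_lineIdempotent h3 h.swap, lineIdempotent_apply,
      if_neg (h.notMem_of_mem_mid hp).1, inv_six]
    field_simp
    norm_num
  · rw [mMul_lineIdempotent_apply_of_mem_parallel h2 h3 h.swap _ hp,
      sum_lineThru_lineIdempotent h3 h, lineIdempotent_apply,
      if_neg (h.notMem_of_mem_right hp).1, inv_six]
    field_simp
    norm_num

lemma two_smul_mMul_lineIdempotent_sub_apply (h2 : (2 : F) ≠ 0) (h3 : (3 : F) ≠ 0)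
    (h : IsParallelClass a b c w) (x : ZMod 3 × ZMod 3 → F) (hp : p ∈ lineThru b w) :
    ((2 : F) • mMul F (lineIdempotent F (lineThru a w)) x - x) p =
      3⁻¹ * ∑ v ∈ lineThru c w, x v := by
  rw [Pi.sub_apply, Pi.smul_apply, smul_eq_mul,
    mMul_lineIdempotent_apply_of_mem_parallel h2 h3 h x hp, inv_six]
  field_simp
  ring

theorem mMul_lineIdempotent_two_smul_mMul_sub (h2 : (2 : F) ≠ 0) (h3 : (3 : F) ≠ 0)
    (h : IsParallelClass a b c w) (x : ZMod 3 × ZMod 3 → F) :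
    mMul F (lineIdempotent F (lineThru a w))
        ((2 : F) • mMul F (lineIdempotent F (lineThru a w)) x - x) =
      (2⁻¹ * (∑ v ∈ lineThru b w, x v + ∑ v ∈ lineThru c w, x v)) •
        lineIdempotent F (lineThru a w) := by
  have hb := sum_lineThru_eq_three_mul h.ne_zero
    fun v hv => two_smul_mMul_lineIdempotent_sub_apply h2 h3 h x hv
  have hc := sum_lineThru_eq_three_mul h.ne_zero
    fun v hv => two_smul_mMul_lineIdempotent_sub_apply h2 h3 h.swap x hv
  rw [← mul_assoc, mul_inv_cancel₀ h3, one_mul] at hb hc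
  refine h.funext (fun p hp => ?_) (fun p hp => ?_) (fun p hp => ?_)
  · rw [mMul_lineIdempotent_apply_of_mem h2 h3 h _ hp, hb, hc, Pi.smul_apply,
      lineIdempotent_apply, if_pos hp, smul_eq_mul, inv_six]
    ring
  · rw [mMul_lineIdempotent_apply_of_mem_parallel h2 h3 h _ hp, hc,
      two_smul_mMul_lineIdempotent_sub_apply h2 h3 h x hp, Pi.smul_apply, lineIdempotent_apply,
      if_neg (h.notMem_of_mem_mid hp).1, smul_eq_mul, inv_six]
    ring
  · rw [mMul_lineIdempotent_apply_of_mem_parallel h2 h3 h.swap _ hp, hb,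
      two_smul_mMul_lineIdempotent_sub_apply h2 h3 h.swap x hp, Pi.smul_apply,
      lineIdempotent_apply, if_neg (h.notMem_of_mem_right hp).1,
      smul_eq_mul, inv_six]
    ring

theorem setOf_mMul_lineIdempotent_eq_self (h2 : (2 : F) ≠ 0) (h3 : (3 : F) ≠ 0)
    (h : IsParallelClass a b c w) :
    {x | mMul F (lineIdempotent F (lineThru a w)) x = x} =
      Set.range (fun t : F => t • lineIdempotent F (lineThru a w)) := by
  ext x
  constructor
  · intro hx
    have hx' : (2 : F) • mMul F (lineIdempotent F (lineThru a w)) x - x = x := by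
      rw [show mMul F _ x = x from hx, two_smul, add_sub_cancel_right]
    refine ⟨_, (mMul_lineIdempotent_two_smul_mMul_sub h2 h3 h x).symm.trans ?_⟩
    rw [hx', show mMul F _ x = x from hx]
  · rintro ⟨t, rfl⟩
    change mMulLeft _ _ = _
    rw [map_smul, mMulLeft_apply, mMul_lineIdempotent_self h2 h3 h]

theorem eq_of_mMul_lineIdempotent_eq_zero (h2 : (2 : F) ≠ 0) (h3 : (3 : F) ≠ 0)
    (h : IsParallelClass a b c w) {x : ZMod 3 × ZMod 3 → F}
    (hx : mMul F (lineIdempotent F (lineThru a w)) x = 0) :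
    x = (∑ i ∈ lineThru a w, x i • (Pi.single i 1 : ZMod 3 × ZMod 3 → F)) +
      (-3⁻¹ * ∑ v ∈ lineThru c w, x v) • (pSum F (lineThru b w) - pSum F (lineThru c w)) := by
  have hmid : ∀ {b' c'}, IsParallelClass a b' c' w →
      ∀ p ∈ lineThru b' w, x p = -3⁻¹ * ∑ v ∈ lineThru c' w, x v := fun h' p hp => by
    have hxp := mMul_lineIdempotent_apply_of_mem_parallel h2 h3 h' x hp
    rw [hx, Pi.zero_apply, inv_six] at hxp
    field_simp at hxp ⊢
    linear_combination -hxp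
  have hb : ∑ v ∈ lineThru b w, x v = -∑ v ∈ lineThru c w, x v := by
    rw [sum_lineThru_eq_three_mul h.ne_zero (hmid h)]
    field_simp
  refine h.funext (fun p hp => ?_) (fun p hp => ?_) (fun p hp => ?_)
  · simp only [Pi.add_apply, Pi.smul_apply, Pi.sub_apply, smul_eq_mul, sum_smul_single_apply,
      pSum_apply, if_pos hp, if_neg (h.notMem_of_mem_left hp).1,
      if_neg (h.notMem_of_mem_left hp).2]
    ring
  · simp only [Pi.add_apply, Pi.smul_apply, Pi.sub_apply, smul_eq_mul, sum_smul_single_apply,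
      pSum_apply, if_pos hp, if_neg (h.notMem_of_mem_mid hp).1,
      if_neg (h.notMem_of_mem_mid hp).2, hmid h p hp]
    ring
  · simp only [Pi.add_apply, Pi.smul_apply, Pi.sub_apply, smul_eq_mul, sum_smul_single_apply,
      pSum_apply, if_pos hp, if_neg (h.notMem_of_mem_right hp).1,
      if_neg (h.notMem_of_mem_right hp).2, hmid h.swap p hp, hb]
    ring

theorem mMul_lineIdempotent_sum_smul_single_add_smul (h2 : (2 : F) ≠ 0) (h3 : (3 : F) ≠ 0)
    (h : IsParallelClass a b c w) (g : ZMod 3 × ZMod 3 → F) (l : F) :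
    mMul F (lineIdempotent F (lineThru a w))
      ((∑ i ∈ lineThru a w, g i • (Pi.single i 1 : ZMod 3 × ZMod 3 → F)) +
        l • (pSum F (lineThru b w) - pSum F (lineThru c w))) = 0 := by
  set y := (∑ i ∈ lineThru a w, g i • (Pi.single i 1 : ZMod 3 × ZMod 3 → F)) +
    l • (pSum F (lineThru b w) - pSum F (lineThru c w))
  have hyb : ∀ p ∈ lineThru b w, y p = l := fun p hp => by
    simp only [y, Pi.add_apply, Pi.smul_apply, Pi.sub_apply, smul_eq_mul, sum_smul_single_apply,
      pSum_apply, if_pos hp, if_neg (h.notMem_of_mem_mid hp).1,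
      if_neg (h.notMem_of_mem_mid hp).2]
    ring
  have hyc : ∀ p ∈ lineThru c w, y p = -l := fun p hp => by
    simp only [y, Pi.add_apply, Pi.smul_apply, Pi.sub_apply, smul_eq_mul, sum_smul_single_apply,
      pSum_apply, if_pos hp, if_neg (h.notMem_of_mem_right hp).1,
      if_neg (h.notMem_of_mem_right hp).2]
    ring
  have hb := sum_lineThru_eq_three_mul h.ne_zero hyb
  have hc := sum_lineThru_eq_three_mul h.ne_zero hyc
  refine h.funext (fun p hp => ?_) (fun p hp => ?_) (fun p hp => ?_)
  · rw [mMul_lineIdempotent_apply_of_mem h2 h3 h _ hp, hb, hc, Pi.zero_apply]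
    ring
  · rw [mMul_lineIdempotent_apply_of_mem_parallel h2 h3 h _ hp, hc, hyb p hp, Pi.zero_apply,
      inv_six]
    field_simp
    ring
  · rw [mMul_lineIdempotent_apply_of_mem_parallel h2 h3 h.swap _ hp, hb, hyc p hp,
      Pi.zero_apply, inv_six]
    field_simp
    ring

theorem setOf_mMul_lineIdempotent_eq_zero (h2 : (2 : F) ≠ 0) (h3 : (3 : F) ≠ 0)
    (h : IsParallelClass a b c w) :
    {x | mMul F (lineIdempotent F (lineThru a w)) x = 0} =
      {x | ∃ (g : ZMod 3 × ZMod 3 → F) (l : F),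
        x = (∑ i ∈ lineThru a w, g i • (Pi.single i 1 : ZMod 3 × ZMod 3 → F)) +
          l • (pSum F (lineThru b w) - pSum F (lineThru c w))} := by
  ext x
  constructor
  · exact fun hx => ⟨x, _, eq_of_mMul_lineIdempotent_eq_zero h2 h3 h hx⟩
  · rintro ⟨g, l, rfl⟩
    exact mMul_lineIdempotent_sum_smul_single_add_smul h2 h3 h g l

theorem sum_lineThru_eq_zero_of_mMul_lineIdempotent_eq_half_smul (h2 : (2 : F) ≠ 0)
    (h3 : (3 : F) ≠ 0) (h : IsParallelClass a b c w) {x : ZMod 3 × ZMod 3 → F}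
    (hx : mMul F (lineIdempotent F (lineThru a w)) x = (2⁻¹ : F) • x) :
    ∑ v ∈ lineThru c w, x v = 0 := by
  have hxb := mMul_lineIdempotent_apply_of_mem_parallel h2 h3 h x (self_mem_lineThru b w)
  rw [hx, Pi.smul_apply, smul_eq_mul, left_eq_add, inv_six] at hxb
  simpa [h2, h3] using hxb

theorem eq_of_mMul_lineIdempotent_eq_half_smul (h2 : (2 : F) ≠ 0) (h3 : (3 : F) ≠ 0)
    (h : IsParallelClass a b c w) {x : ZMod 3 × ZMod 3 → F}
    (hx : mMul F (lineIdempotent F (lineThru a w)) x = (2⁻¹ : F) • x) :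
    x = (∑ i ∈ lineThru b w, x i • (Pi.single i 1 : ZMod 3 × ZMod 3 → F)) +
      (∑ j ∈ lineThru c w, x j • (Pi.single j 1 : ZMod 3 × ZMod 3 → F)) := by
  refine h.funext (fun p hp => ?_) (fun p hp => ?_) (fun p hp => ?_)
  · have hxp := mMul_lineIdempotent_apply_of_mem h2 h3 h x hp
    rw [hx, sum_lineThru_eq_zero_of_mMul_lineIdempotent_eq_half_smul h2 h3 h hx,
      sum_lineThru_eq_zero_of_mMul_lineIdempotent_eq_half_smul h2 h3 h.swap hx, Pi.smul_apply,
      smul_eq_mul] at hxp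
    simp only [Pi.add_apply, sum_smul_single_apply, if_neg (h.notMem_of_mem_left hp).1,
      if_neg (h.notMem_of_mem_left hp).2]
    simpa [h2] using hxp
  · simp only [Pi.add_apply, sum_smul_single_apply, if_pos hp,
      if_neg (h.notMem_of_mem_mid hp).2, add_zero]
  · simp only [Pi.add_apply, sum_smul_single_apply, if_pos hp,
      if_neg (h.notMem_of_mem_right hp).2, zero_add]

theorem mMul_lineIdempotent_sum_smul_single_add (h2 : (2 : F) ≠ 0) (h3 : (3 : F) ≠ 0)
    (h : IsParallelClass a b c w) {g k : ZMod 3 × ZMod 3 → F}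
    (hg : ∑ i ∈ lineThru b w, g i = 0) (hk : ∑ j ∈ lineThru c w, k j = 0) :
    mMul F (lineIdempotent F (lineThru a w))
        ((∑ i ∈ lineThru b w, g i • (Pi.single i 1 : ZMod 3 × ZMod 3 → F)) +
          (∑ j ∈ lineThru c w, k j • (Pi.single j 1 : ZMod 3 × ZMod 3 → F))) =
      (2⁻¹ : F) • ((∑ i ∈ lineThru b w, g i • (Pi.single i 1 : ZMod 3 × ZMod 3 → F)) +
          (∑ j ∈ lineThru c w, k j • (Pi.single j 1 : ZMod 3 × ZMod 3 → F))) := by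
  set y := (∑ i ∈ lineThru b w, g i • (Pi.single i 1 : ZMod 3 × ZMod 3 → F)) +
    (∑ j ∈ lineThru c w, k j • (Pi.single j 1 : ZMod 3 × ZMod 3 → F))
  have hyb : ∀ p ∈ lineThru b w, y p = g p := fun p hp => by
    simp only [y, Pi.add_apply, sum_smul_single_apply, if_pos hp,
      if_neg (h.notMem_of_mem_mid hp).2, add_zero]
  have hyc : ∀ p ∈ lineThru c w, y p = k p := fun p hp => by
    simp only [y, Pi.add_apply, sum_smul_single_apply, if_pos hp,
      if_neg (h.notMem_of_mem_right hp).2, zero_add]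
  have hb : ∑ v ∈ lineThru b w, y v = 0 := (Finset.sum_congr rfl hyb).trans hg
  have hc : ∑ v ∈ lineThru c w, y v = 0 := (Finset.sum_congr rfl hyc).trans hk
  refine h.funext (fun p hp => ?_) (fun p hp => ?_) (fun p hp => ?_)
  · rw [mMul_lineIdempotent_apply_of_mem h2 h3 h _ hp, hb, hc, Pi.smul_apply, smul_eq_mul]
    simp only [y, Pi.add_apply, sum_smul_single_apply, if_neg (h.notMem_of_mem_left hp).1,
      if_neg (h.notMem_of_mem_left hp).2]
    ring
  · rw [mMul_lineIdempotent_apply_of_mem_parallel h2 h3 h _ hp, hc, Pi.smul_apply, smul_eq_mul]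
    ring
  · rw [mMul_lineIdempotent_apply_of_mem_parallel h2 h3 h.swap _ hp, hb, Pi.smul_apply,
      smul_eq_mul]
    ring

theorem setOf_mMul_lineIdempotent_eq_half_smul (h2 : (2 : F) ≠ 0) (h3 : (3 : F) ≠ 0)
    (h : IsParallelClass a b c w) :
    {x | mMul F (lineIdempotent F (lineThru a w)) x = (2⁻¹ : F) • x} =
      {x | ∃ g k : ZMod 3 × ZMod 3 → F,
        (∑ i ∈ lineThru b w, g i) = 0 ∧ (∑ j ∈ lineThru c w, k j) = 0 ∧
        x = (∑ i ∈ lineThru b w, g i • (Pi.single i 1 : ZMod 3 × ZMod 3 → F)) +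
          (∑ j ∈ lineThru c w, k j • (Pi.single j 1 : ZMod 3 × ZMod 3 → F))} := by
  ext x
  constructor
  · exact fun hx => ⟨x, x,
      sum_lineThru_eq_zero_of_mMul_lineIdempotent_eq_half_smul h2 h3 h.swap hx,
      sum_lineThru_eq_zero_of_mMul_lineIdempotent_eq_half_smul h2 h3 h hx,
      eq_of_mMul_lineIdempotent_eq_half_smul h2 h3 h hx⟩
  · rintro ⟨g, k, hg, hk, rfl⟩
    exact mMul_lineIdempotent_sum_smul_single_add h2 h3 h hg hk

theorem mMulLeft_lineIdempotent_cubic (h2 : (2 : F) ≠ 0) (h3 : (3 : F) ≠ 0)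
    (h : IsParallelClass a b c w) (x : ZMod 3 × ZMod 3 → F) :
    let T := mMulLeft (lineIdempotent F (lineThru a w))
    T (T ((2 : F) • T x - x)) = T ((2 : F) • T x - x) := by
  simp only [mMulLeft_apply]
  rw [mMul_lineIdempotent_two_smul_mMul_sub h2 h3 h, ← mMulLeft_apply, map_smul, mMulLeft_apply,
    mMul_lineIdempotent_self h2 h3 h]

end LineIdempotent

/-- Let `char F ∉ {2,3}`, let `L` be a line of the affine plane of order 3 and
let `M`, `N` be the two other lines parallel to `L`.  Then the Matsuo algebra is the direct sum
of the eigenspaces of `x ↦ e_L x` for the eigenvalues `1`, `0`, `1/2`, and these eigenspaces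
are exactly `F·e_L`, `{ Σ_{i∈L} λ_i p_i + λ(Σ_{i∈M} p_i − Σ_{i∈N} p_i) }` and
`{ Σ_{i∈M} λ_i p_i + Σ_{j∈N} μ_j p_j : Σλ_i = 0, Σμ_j = 0 }` respectively. -/
theorem stmt_8 (F : Type*) [Field F] (h2 : (2 : F) ≠ 0) (h3 : (3 : F) ≠ 0)
    (a b c w : ZMod 3 × ZMod 3) (hw : w ≠ 0)
    (hLM : lineThru a w ≠ lineThru b w) (hLN : lineThru a w ≠ lineThru c w)
    (hMN : lineThru b w ≠ lineThru c w) :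
    let eL : ZMod 3 × ZMod 3 → F :=
      (3⁻¹ : F) • pSum F Finset.univ - (2 / 3 : F) • pSum F (lineThru a w)
    ({x : ZMod 3 × ZMod 3 → F | mMul F eL x = x} =
        Set.range (fun t : F => t • eL)) ∧
    ({x : ZMod 3 × ZMod 3 → F | mMul F eL x = 0} =
        {x : ZMod 3 × ZMod 3 → F | ∃ (g : ZMod 3 × ZMod 3 → F) (l : F),
          x = (∑ i ∈ lineThru a w, g i • (Pi.single i 1 : ZMod 3 × ZMod 3 → F)) +
            l • (pSum F (lineThru b w) - pSum F (lineThru c w))}) ∧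
    ({x : ZMod 3 × ZMod 3 → F | mMul F eL x = (2⁻¹ : F) • x} =
        {x : ZMod 3 × ZMod 3 → F | ∃ g h : ZMod 3 × ZMod 3 → F,
          (∑ i ∈ lineThru b w, g i) = 0 ∧ (∑ j ∈ lineThru c w, h j) = 0 ∧
          x = (∑ i ∈ lineThru b w, g i • (Pi.single i 1 : ZMod 3 × ZMod 3 → F)) +
            (∑ j ∈ lineThru c w, h j • (Pi.single j 1 : ZMod 3 × ZMod 3 → F))}) ∧
    (∀ x : ZMod 3 × ZMod 3 → F, ∃ x1 x0 xh : ZMod 3 × ZMod 3 → F,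
      mMul F eL x1 = x1 ∧ mMul F eL x0 = 0 ∧ mMul F eL xh = (2⁻¹ : F) • xh ∧
      x = x1 + x0 + xh ∧
      ∀ y1 y0 yh : ZMod 3 × ZMod 3 → F,
        mMul F eL y1 = y1 → mMul F eL y0 = 0 → mMul F eL yh = (2⁻¹ : F) • yh →
        x = y1 + y0 + yh → y1 = x1 ∧ y0 = x0 ∧ yh = xh) := by
  intro eL
  have h : IsParallelClass a b c w := ⟨hw, hLM, hLN, hMN⟩
  exact ⟨setOf_mMul_lineIdempotent_eq_self h2 h3 h, setOf_mMul_lineIdempotent_eq_zero h2 h3 h,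
    setOf_mMul_lineIdempotent_eq_half_smul h2 h3 h,
    (mMulLeft eL).exists_eigen_decomposition h2 (mMulLeft_lineIdempotent_cubic h2 h3 h)⟩
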